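/- arXiv:1701.03536 — 2 statements merged into one kernel-verified Lean document; each statement's English description precedes it below -/
import Mathlib

section
/- In the three-qubit Hilbert space ℂ²⊗ℂ²⊗ℂ², the W-state |W⟩ = (1/√3)(|011⟩+|101⟩+|110⟩) is, in projective space, the limit as a → 0 of the states A(a)^{⊗3}|GHZ⟩, where |GHZ⟩ = (1/√2)(|000⟩+|111⟩) and A(a) = (1/√2)·[[a, a],[−a⁻¹, a⁻¹]]. Concretely, there exist nonzero scalars c(a) such that c(a)·A(a)^{⊗3}|GHZ⟩ converges to |W⟩ as a → 0⁺. -/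
open scoped BigOperators

/-- A computational basis vector `|v₀v₁v₂⟩` of the three-qubit space,
modelled as `(Fin 3 → Fin 2) → ℂ`. -/
noncomputable def basisKet (v : Fin 3 → Fin 2) : (Fin 3 → Fin 2) → ℂ :=
  fun f => if f = v then 1 else 0

/-- The three-qubit W-state `(1/√3)(|011⟩+|101⟩+|110⟩)`. -/
noncomputable def Wstate : (Fin 3 → Fin 2) → ℂ :=
  ((1 : ℂ) / Real.sqrt 3) •
    (basisKet ![0, 1, 1] + basisKet ![1, 0, 1] + basisKet ![1, 1, 0])

/-- The three-qubit GHZ state `(1/√2)(|000⟩+|111⟩)`. -/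
noncomputable def GHZstate : (Fin 3 → Fin 2) → ℂ :=
  ((1 : ℂ) / Real.sqrt 2) • (basisKet ![0, 0, 0] + basisKet ![1, 1, 1])

/-- The matrix `A(a) = (1/√2)·[[a, a], [−a⁻¹, a⁻¹]]` for a real parameter `a`. -/
noncomputable def Amat (a : ℝ) : Matrix (Fin 2) (Fin 2) ℂ :=
  ((1 : ℂ) / Real.sqrt 2) • !![(a : ℂ), (a : ℂ); -(a : ℂ)⁻¹, (a : ℂ)⁻¹]

/-- The action of `A⊗A⊗A` on a three-qubit state. -/
noncomputable def actTriple (A : Matrix (Fin 2) (Fin 2) ℂ)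
    (ψ : (Fin 3 → Fin 2) → ℂ) : (Fin 3 → Fin 2) → ℂ :=
  fun f => ∑ g : Fin 3 → Fin 2, (∏ i : Fin 3, A (f i) (g i)) * ψ g

set_option maxHeartbeats 2000000 in
lemma key (a : ℝ) (ha : a ≠ 0) :
    ((2*a/Real.sqrt 3 : ℝ) : ℂ) • actTriple (Amat a) GHZstate
      = Wstate + (((a:ℂ)^4 / (Real.sqrt 3 : ℝ))) • basisKet ![0,0,0] := by
  have h2 : ((Real.sqrt 2 : ℝ) : ℂ) ≠ 0 := by
    exact_mod_cast Complex.ofReal_ne_zero.2 (by positivity)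
  have h3 : ((Real.sqrt 3 : ℝ) : ℂ) ≠ 0 := by
    exact_mod_cast Complex.ofReal_ne_zero.2 (by positivity)
  have hs2 : ((Real.sqrt 2 : ℝ) : ℂ)^2 = 2 := by
    rw [← Complex.ofReal_pow, Real.sq_sqrt (by norm_num)]; norm_num
  have ha' : (a:ℂ) ≠ 0 := Complex.ofReal_ne_zero.2 ha
  have hs4 : ((Real.sqrt 2 : ℝ) : ℂ)^4 = 4 := by
    rw [show (4:ℕ) = 2*2 from rfl, pow_mul, hs2]; norm_num
  funext f
  have hf : f = ![f 0, f 1, f 2] := by funext i; fin_cases i <;> rfl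
  have h0 : f 0 = 0 ∨ f 0 = 1 := by omega
  have h1 : f 1 = 0 ∨ f 1 = 1 := by omega
  have hh2 : f 2 = 0 ∨ f 2 = 1 := by omega
  simp only [actTriple, GHZstate, Wstate, basisKet, Pi.smul_apply, Pi.add_apply,
    smul_eq_mul, mul_add, mul_ite, mul_one, mul_zero, Finset.sum_add_distrib,
    Finset.sum_ite_eq', Finset.mem_univ, if_true, Fin.prod_univ_three]
  rcases h0 with h0 | h0 <;> rcases h1 with h1 | h1 <;> rcases hh2 with hc | hc <;>
    rw [hf, h0, h1, hc] <;>
    simp [Amat, funext_iff, Fin.forall_fin_succ] <;> field_simp <;> ring_nf <;> simp only [inv_pow, hs4] <;> field_simp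


/-- In projective space, `|W⟩` is the limit as `a → 0⁺` of
`A(a)^{⊗3}|GHZ⟩`: there are nonzero scalars `c(a)` such that
`c(a) • A(a)^{⊗3}|GHZ⟩ → |W⟩` in the three-qubit Hilbert space as `a → 0⁺`. -/
theorem W_is_limit_of_GHZ_orbit :
    ∃ c : ℝ → ℂ, (∀ a : ℝ, a ≠ 0 → c a ≠ 0) ∧
      Filter.Tendsto (fun a : ℝ => c a • actTriple (Amat a) GHZstate)
        (nhdsWithin 0 (Set.Ioi 0)) (nhds Wstate) := by
  refine ⟨fun a => ((2*a/Real.sqrt 3 : ℝ) : ℂ), ?_, ?_⟩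
  · intro a ha
    have h3 : Real.sqrt 3 ≠ 0 := by positivity
    simp [ha, h3]
  · have hcont : Filter.Tendsto
        (fun a : ℝ => Wstate + (((a:ℂ)^4 / (Real.sqrt 3 : ℝ))) • basisKet ![0,0,0])
        (nhdsWithin 0 (Set.Ioi 0)) (nhds Wstate) := by
      have hc : Continuous (fun a : ℝ =>
          Wstate + (((a:ℂ)^4 / (Real.sqrt 3 : ℝ))) • basisKet ![0,0,0]) := by
        fun_prop
      have h := hc.tendsto 0
      have hv : Wstate + (((0:ℝ):ℂ)^4 / (Real.sqrt 3 : ℝ)) • basisKet ![0,0,0] = Wstate := by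
        norm_num
      rw [hv] at h
      exact h.mono_left nhdsWithin_le_nhds
    refine hcont.congr' ?_
    filter_upwards [self_mem_nhdsWithin] with a ha
    exact (key a (ne_of_gt ha)).symm
end

section
/- The three-qubit W-state |W⟩ = (1/√3)(|011⟩+|101⟩+|110⟩) has tensor rank 3 with respect to the set of product vectors: |W⟩ cannot be written as a sum of two product vectors v₁⊗v₂⊗v₃, but can be written as a sum of three. -/
open scoped BigOperators

/-- The product (Segre) vector `u ⊗ v ⊗ w` in the three-qubit space. -/
def prodVec (u v w : Fin 2 → ℂ) : (Fin 3 → Fin 2) → ℂ :=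
  fun f => u (f 0) * v (f 1) * w (f 2)

lemma Wstate_apply (f : Fin 3 → Fin 2) :
    Wstate f = ((1 : ℂ) / Real.sqrt 3) *
      ((if f = ![0,1,1] then 1 else 0) + (if f = ![1,0,1] then 1 else 0)
        + (if f = ![1,1,0] then 1 else 0)) := by
  simp [Wstate, basisKet, mul_add]

lemma sqrt3_ne_zero : ((1 : ℂ) / Real.sqrt 3) ≠ 0 := by
  have h3 : (0:ℝ) < Real.sqrt 3 := Real.sqrt_pos.mpr (by norm_num)
  simp only [ne_eq, div_eq_zero_iff, one_ne_zero, false_or]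
  exact_mod_cast h3.ne'

/-- The three-qubit W-state has tensor rank 3: it is not a sum of
two product vectors, but it is a sum of three product vectors. -/
theorem Wstate_tensor_rank_three :
    (¬ ∃ u₁ v₁ w₁ u₂ v₂ w₂ : Fin 2 → ℂ,
        Wstate = prodVec u₁ v₁ w₁ + prodVec u₂ v₂ w₂) ∧
    (∃ u₁ v₁ w₁ u₂ v₂ w₂ u₃ v₃ w₃ : Fin 2 → ℂ,
        Wstate = prodVec u₁ v₁ w₁ + prodVec u₂ v₂ w₂ + prodVec u₃ v₃ w₃) := by
  set c : ℂ := (1 : ℂ) / Real.sqrt 3 with hc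
  have hc0 : c ≠ 0 := sqrt3_ne_zero
  constructor
  · rintro ⟨u₁, v₁, w₁, u₂, v₂, w₂, hW⟩
    have E : ∀ f : Fin 3 → Fin 2,
        u₁ (f 0) * v₁ (f 1) * w₁ (f 2) + u₂ (f 0) * v₂ (f 1) * w₂ (f 2) = Wstate f := by
      intro f; rw [hW]; rfl
    have h1 : u₁ 0 * v₁ 0 * w₁ 0 + u₂ 0 * v₂ 0 * w₂ 0 = 0 := by
      have := E ![0,0,0]; rw [Wstate_apply] at this
      simpa (config := { decide := true }) [hc] using this
    have h2 : u₁ 0 * v₁ 0 * w₁ 1 + u₂ 0 * v₂ 0 * w₂ 1 = 0 := by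
      have := E ![0,0,1]; rw [Wstate_apply] at this
      simpa (config := { decide := true }) [hc] using this
    have h3 : u₁ 0 * v₁ 1 * w₁ 0 + u₂ 0 * v₂ 1 * w₂ 0 = 0 := by
      have := E ![0,1,0]; rw [Wstate_apply] at this
      simpa (config := { decide := true }) [hc] using this
    have h4 : u₁ 0 * v₁ 1 * w₁ 1 + u₂ 0 * v₂ 1 * w₂ 1 = c := by
      have := E ![0,1,1]; rw [Wstate_apply] at this
      simpa (config := { decide := true }) [hc] using this
    have h5 : u₁ 1 * v₁ 0 * w₁ 0 + u₂ 1 * v₂ 0 * w₂ 0 = 0 := by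
      have := E ![1,0,0]; rw [Wstate_apply] at this
      simpa (config := { decide := true }) [hc] using this
    have h6 : u₁ 1 * v₁ 0 * w₁ 1 + u₂ 1 * v₂ 0 * w₂ 1 = c := by
      have := E ![1,0,1]; rw [Wstate_apply] at this
      simpa (config := { decide := true }) [hc] using this
    have h7 : u₁ 1 * v₁ 1 * w₁ 0 + u₂ 1 * v₂ 1 * w₂ 0 = c := by
      have := E ![1,1,0]; rw [Wstate_apply] at this
      simpa (config := { decide := true }) [hc] using this
    have h8 : u₁ 1 * v₁ 1 * w₁ 1 + u₂ 1 * v₂ 1 * w₂ 1 = 0 := by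
      have := E ![1,1,1]; rw [Wstate_apply] at this
      simpa (config := { decide := true }) [hc] using this
    clear E hW
    set a₁ := u₁ 0; set b₁ := u₁ 1; set p₁ := v₁ 0; set q₁ := v₁ 1
    set s₁ := w₁ 0; set t₁ := w₁ 1
    set a₂ := u₂ 0; set b₂ := u₂ 1; set p₂ := v₂ 0; set q₂ := v₂ 1
    set s₂ := w₂ 0; set t₂ := w₂ 1
    set D : ℂ := p₁*s₁*q₂*t₂ + p₂*s₂*q₁*t₁ - p₁*t₁*q₂*s₂ - p₂*t₂*q₁*s₁ with hD
    have fA : a₁*a₂*D = 0 := by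
      linear_combination (a₁*q₁*t₁ + a₂*q₂*t₂) * h1 - (a₁*q₁*s₁ + a₂*q₂*s₂) * h2
    have fB : (a₁*b₂ + a₂*b₁)*D = 0 := by
      linear_combination (b₁*q₁*t₁ + b₂*q₂*t₂) * h1 + (a₁*q₁*t₁ + a₂*q₂*t₂) * h5
        - (a₁*p₁*t₁ + a₂*p₂*t₂) * h7 - (b₁*p₁*t₁ + b₂*p₂*t₂) * h3 - c*h2
    have fC : b₁*b₂*D = -c^2 := by
      linear_combination (b₁*q₁*t₁ + b₂*q₂*t₂) * h5 - (b₁*q₁*s₁ + b₂*q₂*s₂) * h6 - c*h7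
    have hc2 : -c^2 ≠ 0 := by
      simpa using pow_ne_zero 2 hc0
    have hDne : D ≠ 0 := by
      intro h; rw [h, mul_zero] at fC; exact hc2 fC.symm
    have hb₁ : b₁ ≠ 0 := by
      intro h; rw [h, zero_mul, zero_mul] at fC; exact hc2 fC.symm
    have hb₂ : b₂ ≠ 0 := by
      intro h; rw [h, mul_zero, zero_mul] at fC; exact hc2 fC.symm
    have ha : a₁ = 0 ∨ a₂ = 0 := by
      rcases mul_eq_zero.mp fA with h | h
      · exact mul_eq_zero.mp h
      · exact absurd h hDne
    have ha₁ : a₁ = 0 := by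
      rcases ha with h | h
      · exact h
      · rcases mul_eq_zero.mp fB with h' | h'
        · have : a₁ * b₂ = 0 := by
            have := fB
            rcases mul_eq_zero.mp fB with hx | hx
            · linear_combination hx - b₁ * h
            · exact absurd hx hDne
          rcases mul_eq_zero.mp this with hx | hx
          · exact hx
          · exact absurd hx hb₂
        · exact absurd h' hDne
    have ha₂ : a₂ = 0 := by
      rcases mul_eq_zero.mp fB with h' | h'
      · have : a₂ * b₁ = 0 := by linear_combination h' - b₂ * ha₁
        rcases mul_eq_zero.mp this with hx | hx
        · exact hx
        · exact absurd hx hb₁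
      · exact absurd h' hDne
    rw [ha₁, ha₂] at h4
    simp at h4
    exact hc0 h4.symm
  · refine ⟨![c,0], ![0,1], ![0,1], ![0,1], ![c,0], ![0,1], ![0,1], ![0,1], ![c,0], ?_⟩
    funext f
    have hf : f = ![f 0, f 1, f 2] := by
      funext i; fin_cases i <;> rfl
    have hx : ∀ x : Fin 2, x = 0 ∨ x = 1 := by decide
    rw [Wstate_apply]
    rcases hx (f 0) with h0 | h0 <;> rcases hx (f 1) with h1 | h1 <;>
      rcases hx (f 2) with h2 | h2 <;>
      · rw [hf, h0, h1, h2]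
        simp (config := { decide := true }) [prodVec, hc]
end
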